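/- Suppose λ < ω₁ and ⟨P_α⟩_{α<λ} is a ⊑-increasing sequence of countable special perfect-tree forcing notions (P_α ⊑ P_β whenever α < β < λ). Then there exists a countable special perfect-tree forcing notion Q such that P_α ⊑ Q for every α < λ. -/

import Mathlib

noncomputable section

/-- Finite binary strings. -/
abbrev Str : Type := List Bool

/-- Points of Cantor space `2^ω`. -/
abbrev Pt : Type := ℕ → Bool

/-- The length-`n` initial segment of a point of Cantor space, as a string. -/
def seg (a : Pt) (n : ℕ) : Str := (List.range n).map a

/-- A tree: a set of strings closed under initial segments. -/
def IsTree (T : Set Str) : Prop := ∀ ⦃s t : Str⦄, s <+: t → t ∈ T → s ∈ T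

/-- A perfect tree: a nonempty tree in which every string has two
incomparable extensions inside the tree. -/
def IsPerfectTree (T : Set Str) : Prop :=
  T.Nonempty ∧ IsTree T ∧
    ∀ s ∈ T, ∃ t₁ t₂, t₁ ∈ T ∧ t₂ ∈ T ∧ s <+: t₁ ∧ s <+: t₂ ∧ ¬ t₁ <+: t₂ ∧ ¬ t₂ <+: t₁

/-- The restriction `T↾s = {t ∈ T : s ⊆ t or t ⊆ s}`. -/
def Tres (T : Set Str) (s : Str) : Set Str := {t ∈ T | s <+: t ∨ t <+: s}

/-- The set `[T]` of branches of a tree `T`. -/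
def branches (T : Set Str) : Set Pt := {a | ∀ n, seg a n ∈ T}

/-- `s` is the stem (root) of `T`: the longest `s ∈ T` with `T = T↾s`. -/
def IsStem (T : Set Str) (s : Str) : Prop :=
  s ∈ T ∧ T = Tres T s ∧ ∀ t ∈ T, T = Tres T t → t <+: s

open Classical in
/-- The stem `root(T)` of a tree (junk value `[]` if there is none). -/
def stem (T : Set Str) : Str := if h : ∃ s, IsStem T s then h.choose else []

/-- Simple splitting `T→i = T↾(root(T)⌢i)`. -/
def splitOne (T : Set Str) (i : Bool) : Set Str := Tres T (stem T ++ [i])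

/-- Iterated splitting `T→u`. -/
def splitIter (T : Set Str) (u : Str) : Set Str := u.foldl splitOne T

/-- Almost disjointness of trees: finite intersection. -/
def AD (S T : Set Str) : Prop := (S ∩ T).Finite

/-- A perfect-tree forcing notion: a nonempty set of perfect trees closed
under restrictions. -/
def IsPTF (P : Set (Set Str)) : Prop :=
  P.Nonempty ∧ (∀ T ∈ P, IsPerfectTree T) ∧ ∀ T ∈ P, ∀ s ∈ T, Tres T s ∈ P

/-- `A` is relatively clopen in `B` (as a subspace of Cantor space). -/
def ClopenIn (A B : Set Pt) : Prop := IsClopen ((fun x : B => (x : Pt)) ⁻¹' A)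

/-- `A` is relatively open in `B` (as a subspace of Cantor space). -/
def OpenIn (A B : Set Pt) : Prop := IsOpen ((fun x : B => (x : Pt)) ⁻¹' A)

/-- A special perfect-tree forcing notion: `P = {T↾s : s ∈ T ∈ A}` for an
antichain (pairwise a.d. set) `A ⊆ P`. -/
def SpecialPTF (P : Set (Set Str)) : Prop :=
  ∃ A ⊆ P, A.Pairwise AD ∧ P = {R | ∃ T ∈ A, ∃ s ∈ T, R = Tres T s}

/-- A regular perfect-tree forcing notion: `[S] ∩ [T]` is relatively clopen
in `[S]` or in `[T]`, for all `S, T ∈ P`. -/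
def RegularPTF (P : Set (Set Str)) : Prop :=
  ∀ S ∈ P, ∀ T ∈ P,
    ClopenIn (branches S ∩ branches T) (branches S) ∨
    ClopenIn (branches S ∩ branches T) (branches T)

/-- `T ⊆ᶠ ⋃ D`: `[T]` is covered by finitely many `[S]`, `S ∈ D`. -/
def SqFin (T : Set Str) (D : Set (Set Str)) : Prop :=
  ∃ D' ⊆ D, D'.Finite ∧ branches T ⊆ ⋃ S ∈ D', branches S

/-- `P ⊑ Q`: `Q` is a refinement of `P`. -/
def Refines (P Q : Set (Set Str)) : Prop :=
  (∀ T ∈ P, ∃ S ∈ Q, S ⊆ T) ∧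
  (∀ S ∈ Q, SqFin S P) ∧
  (∀ S ∈ Q, ∀ T ∈ P, ClopenIn (branches S ∩ branches T) (branches S) ∧ ¬ T ⊆ S)

/-- `D` is dense in `P`. -/
def DenseIn (D P : Set (Set Str)) : Prop := ∀ T ∈ P, ∃ S ∈ D, S ⊆ T

/-- `D` is pre-dense in `P`. -/
def PreDenseIn (D P : Set (Set Str)) : Prop :=
  DenseIn {T ∈ P | ∃ S ∈ D, T ⊆ S} P

/-- `P ⊑_D Q`: `Q` locks `D` over `P`. -/
def Locks (P D Q : Set (Set Str)) : Prop :=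
  Refines P Q ∧ ∀ S ∈ Q, SqFin S D

/-- A finite splitting system of height `n` over `P`. -/
def IsFSS (P : Set (Set Str)) (n : ℕ) (φ : Str → Set Str) : Prop :=
  (∀ s : Str, s.length ≤ n → φ s ∈ P) ∧
  ∀ (s : Str) (i : Bool), s.length < n → φ (s ++ [i]) ⊆ splitOne (φ s) i

/-!
Fix a nondecreasing sequence `c 0 ≤ c 1 ≤ ⋯` cofinal in `λ` and enumerate the conditions of all
the `P α`. Below each enumerated condition a fusion argument along `P (c 0), P (c 1), …` gives a
perfect tree `S` whose `n`-th level is covered by finitely many trees of `P (c n)`; finite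
covering and relative clopenness then pass from `P α ⊑ P (c n)` to `S`, for every `α < λ` at
once. No condition `T` of `P α` lies inside `S`: when `α < c n` this is clause (iii) of
`P α ⊑ P (c n)`, and when `c` stabilises at `α` it is enforced by nodes deliberately left out
of the fusion. Starting each fusion at a node outside the earlier trees makes the trees pairwise
almost disjoint, and `Q` is the special forcing they generate.
-/

/-! ### Strings and cones -/

@[simp] lemma seg_length (x : Pt) (n : ℕ) : (seg x n).length = n := by
  simp [seg]

lemma seg_eq_seg_iff {x y : Pt} {n : ℕ} : seg x n = seg y n ↔ ∀ i < n, x i = y i := by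
  simp [seg, List.map_inj_left]

lemma seg_prefix_seg (x : Pt) {m n : ℕ} (h : m ≤ n) : seg x m <+: seg x n := by
  obtain ⟨k, rfl⟩ := Nat.exists_eq_add_of_le h
  simp [seg, List.range_add]

lemma seg_getD {u : Str} {n : ℕ} (h : n ≤ u.length) :
    seg (fun i => u.getD i false) n = u.take n := by
  apply List.ext_getElem (by simpa [seg] using h)
  intro i hi _
  simp only [seg_length] at hi
  simp [seg, List.getElem?_eq_getElem (by omega : i < u.length)]

lemma IncompRel.of_prefix_right {s t t' : Str} (h : IncompRel (· <+: ·) s t) (ht : t <+: t') :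
    IncompRel (· <+: ·) s t' :=
  ⟨fun hs => (List.prefix_or_prefix_of_prefix hs ht).elim h.1 h.2, fun ht' => h.2 (ht.trans ht')⟩

def cone (s : Str) : Set Pt := {x | seg x s.length = s}

lemma mem_cone_seg (x : Pt) (n : ℕ) : x ∈ cone (seg x n) := by
  simp [cone]

lemma prefix_of_mem_cone {s t : Str} {x : Pt} (hs : x ∈ cone s) (ht : x ∈ cone t)
    (h : s.length ≤ t.length) : s <+: t := by
  rw [← hs, ← ht]
  exact seg_prefix_seg x h

lemma cone_anti {s t : Str} (h : s <+: t) : cone t ⊆ cone s := fun x hx => by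
  have hseg : seg x s.length <+: t := hx ▸ seg_prefix_seg x h.length_le
  rcases List.prefix_or_prefix_of_prefix hseg h with h' | h'
  exacts [h'.eq_of_length (by simp), (h'.eq_of_length (by simp)).symm]

lemma disjoint_cone_of_incompRel {s t : Str} (h : IncompRel (· <+: ·) s t) :
    Disjoint (cone s) (cone t) := by
  refine Set.disjoint_left.2 fun x hs ht => ?_
  rcases le_total s.length t.length with hst | hts
  exacts [h.1 (prefix_of_mem_cone hs ht hst), h.2 (prefix_of_mem_cone ht hs hts)]

lemma isOpen_setOf_seg_mem (A : Set Str) (n : ℕ) : IsOpen {x : Pt | seg x n ∈ A} := by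
  refine isOpen_iff_forall_mem_open.2 fun x hx => ⟨PiNat.cylinder x n, fun y hy => ?_,
    PiNat.isOpen_cylinder (fun _ => Bool) x n, PiNat.self_mem_cylinder x n⟩
  show seg y n ∈ A
  rwa [seg_eq_seg_iff.2 (PiNat.mem_cylinder_iff.1 hy)]

lemma isClopen_setOf_seg_mem (A : Set Str) (n : ℕ) : IsClopen {x : Pt | seg x n ∈ A} :=
  ⟨isOpen_compl_iff.1 (isOpen_setOf_seg_mem Aᶜ n), isOpen_setOf_seg_mem A n⟩

lemma isClopen_cone (s : Str) : IsClopen (cone s) :=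
  isClopen_setOf_seg_mem {s} s.length

/-! ### Trees and their branches -/

lemma branches_eq_iInter (T : Set Str) : branches T = ⋂ n, {x | seg x n ∈ T} := by
  ext
  simp [branches]

lemma isClosed_branches (T : Set Str) : IsClosed (branches T) := by
  rw [branches_eq_iInter]
  exact isClosed_iInter fun n => (isClopen_setOf_seg_mem T n).isClosed

lemma branches_mono {S T : Set Str} (h : S ⊆ T) : branches S ⊆ branches T :=
  fun _ hx n => h (hx n)

lemma mem_of_mem_branches_of_mem_cone {T : Set Str} {s : Str} {x : Pt}
    (hx : x ∈ branches T) (hs : x ∈ cone s) : s ∈ T :=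
  hs ▸ hx s.length

lemma Tres_subset (T : Set Str) (s : Str) : Tres T s ⊆ T := fun _ ht => ht.1

lemma Tres_mono {S T : Set Str} (h : S ⊆ T) (s : Str) : Tres S s ⊆ Tres T s :=
  fun _ ht => ⟨h ht.1, ht.2⟩

lemma mem_Tres_self {T : Set Str} {s : Str} (hs : s ∈ T) : s ∈ Tres T s :=
  ⟨hs, Or.inl (List.prefix_refl s)⟩

lemma Tres_nil (T : Set Str) : Tres T [] = T := by
  ext t; simp [Tres]

lemma Tres_Tres_of_prefix (T : Set Str) {s t : Str} (h : s <+: t) :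
    Tres (Tres T s) t = Tres T t := by
  ext u
  refine ⟨fun hu => ⟨hu.1.1, hu.2⟩, fun hu => ⟨⟨hu.1, ?_⟩, hu.2⟩⟩
  rcases hu.2 with htu | hut
  · exact Or.inl (h.trans htu)
  · exact List.prefix_or_prefix_of_prefix h hut

lemma Tres_Tres_of_prefix' (T : Set Str) {s t : Str} (h : t <+: s) :
    Tres (Tres T s) t = Tres T s := by
  ext u
  refine ⟨fun hu => hu.1, fun hu => ⟨hu, ?_⟩⟩
  rcases hu.2 with hsu | hus
  · exact Or.inl (h.trans hsu)
  · exact (List.prefix_or_prefix_of_prefix hus h).symm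

lemma branches_Tres (T : Set Str) (s : Str) : branches (Tres T s) = branches T ∩ cone s := by
  ext x
  refine ⟨fun hx => ⟨fun n => (hx n).1, ?_⟩, fun ⟨hx, hs⟩ n => ⟨hx n, ?_⟩⟩
  · rcases (hx s.length).2 with h | h
    · exact (h.eq_of_length (by simp)).symm
    · exact h.eq_of_length (by simp)
  · rcases le_total s.length n with h | h
    · exact Or.inl (hs ▸ seg_prefix_seg x h)
    · exact Or.inr (hs ▸ seg_prefix_seg x h)

lemma isTree_Tres {T : Set Str} (hT : IsTree T) (s : Str) : IsTree (Tres T s) := by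
  intro u t hut ht
  refine ⟨hT hut ht.1, ?_⟩
  rcases ht.2 with hst | hts
  · exact List.prefix_or_prefix_of_prefix hst hut
  · exact Or.inr (hut.trans hts)

lemma AD.branches_inter_eq_empty {S T : Set Str} (h : AD S T) :
    branches S ∩ branches T = ∅ := by
  refine Set.eq_empty_of_forall_notMem fun x hx => ?_
  have hinj : Function.Injective (seg x) := fun m n hmn => by
    simpa using congrArg List.length hmn
  exact Set.infinite_of_injective_forall_mem hinj (s := S ∩ T) (fun n => ⟨hx.1 n, hx.2 n⟩) h

lemma AD.symm {S T : Set Str} (h : AD S T) : AD T S := by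
  rwa [AD, Set.inter_comm]

lemma AD_of_subset_Tres {S S' T : Set Str} {t : Str} (hS : S ⊆ Tres T t) (hS' : IsTree S')
    (ht : t ∉ S') : AD S S' := by
  refine (List.finite_toSet t.inits).subset fun u hu => ?_
  rcases (hS hu.1).2 with htu | hut
  · exact absurd (hS' htu hu.2) ht
  · exact (List.mem_inits u t).2 hut

namespace IsPerfectTree

variable {T : Set Str}

lemma nil_mem (hT : IsPerfectTree T) : [] ∈ T := by
  obtain ⟨t, ht⟩ := hT.1
  exact hT.2.1 List.nil_prefix ht

lemma exists_longer (hT : IsPerfectTree T) {s : Str} (hs : s ∈ T) (m : ℕ) :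
    ∃ t ∈ T, s <+: t ∧ m ≤ t.length := by
  induction m with
  | zero => exact ⟨s, hs, List.prefix_refl s, Nat.zero_le _⟩
  | succ m ih =>
    obtain ⟨t, ht, hst, hm⟩ := ih
    obtain ⟨t₁, t₂, h₁, h₂, ht₁, ht₂, h₁₂, h₂₁⟩ := hT.2.2 t ht
    have : t ≠ t₁ := fun h => h₁₂ (h ▸ ht₂)
    exact ⟨t₁, h₁, hst.trans ht₁, lt_of_le_of_lt hm
      (lt_of_le_of_ne ht₁.length_le fun h => this (ht₁.eq_of_length h))⟩

lemma infinite (hT : IsPerfectTree T) : T.Infinite := fun hfin => by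
  obtain ⟨L, hL⟩ := (hfin.image List.length).bddAbove
  obtain ⟨t, ht, -, hlen⟩ := hT.exists_longer hT.nil_mem (L + 1)
  have := hL ⟨t, ht, rfl⟩
  omega

lemma mem_of_subset_Tres (hT : IsPerfectTree T) {R : Set Str} {t : Str} (h : T ⊆ Tres R t) :
    t ∈ T := by
  obtain ⟨w, hw, -, hlen⟩ := hT.exists_longer hT.nil_mem t.length
  rcases (h hw).2 with htw | hwt
  · exact hT.2.1 htw hw
  · rwa [← hwt.eq_of_length (le_antisymm hwt.length_le hlen)]

lemma branches_nonempty (hT : IsPerfectTree T) : (branches T).Nonempty := by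
  rw [branches_eq_iInter]
  refine IsCompact.nonempty_iInter_of_sequence_nonempty_isCompact_isClosed _
    (fun n x hx => hT.2.1 (seg_prefix_seg x n.le_succ) hx) (fun n => ?_)
    (isClopen_setOf_seg_mem T 0).isClosed.isCompact
    (fun n => (isClopen_setOf_seg_mem T n).isClosed)
  obtain ⟨u, hu, -, hn⟩ := hT.exists_longer hT.nil_mem n
  exact ⟨fun i => u.getD i false, show seg _ n ∈ T from
    (seg_getD hn).symm ▸ hT.2.1 (List.take_prefix n u) hu⟩

lemma exists_incompRel_extensions (hT : IsPerfectTree T) {s : Str} (hs : s ∈ T) :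
    ∃ t : Bool → Str, ∃ h ∈ T, s <+: h ∧ (∀ i, t i ∈ T ∧ s <+: t i) ∧
      IncompRel (· <+: ·) (t false) (t true) ∧ ∀ i, IncompRel (· <+: ·) h (t i) := by
  obtain ⟨a, h, ha, hh, hsa, hsh, hah, hha⟩ := hT.2.2 s hs
  obtain ⟨a₀, a₁, ha₀, ha₁, haa₀, haa₁, h₀₁, h₁₀⟩ := hT.2.2 a ha
  refine ⟨fun i => bif i then a₁ else a₀, h, hh, hsh, fun i => ?_, ⟨h₀₁, h₁₀⟩, fun i => ?_⟩
  · cases i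
    exacts [⟨ha₀, hsa.trans haa₀⟩, ⟨ha₁, hsa.trans haa₁⟩]
  · cases i
    exacts [IncompRel.of_prefix_right ⟨hha, hah⟩ haa₀, IncompRel.of_prefix_right ⟨hha, hah⟩ haa₁]

end IsPerfectTree

lemma isPerfectTree_Tres {T : Set Str} (hT : IsPerfectTree T) {s : Str} (hs : s ∈ T) :
    IsPerfectTree (Tres T s) := by
  refine ⟨⟨s, mem_Tres_self hs⟩, isTree_Tres hT.2.1 s, fun t ht => ?_⟩
  obtain ⟨u, hu, hsu, hut⟩ : ∃ u ∈ T, s <+: u ∧ t <+: u := by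
    rcases ht.2 with hst | hts
    exacts [⟨t, ht.1, hst, List.prefix_refl t⟩, ⟨s, hs, List.prefix_refl s, hts⟩]
  obtain ⟨t₁, t₂, h₁, h₂, hu₁, hu₂, h₁₂, h₂₁⟩ := hT.2.2 u hu
  exact ⟨t₁, t₂, ⟨h₁, Or.inl (hsu.trans hu₁)⟩, ⟨h₂, Or.inl (hsu.trans hu₂)⟩,
    hut.trans hu₁, hut.trans hu₂, h₁₂, h₂₁⟩

def prefixTree (X : Set Pt) : Set Str := {s | (X ∩ cone s).Nonempty}

lemma isTree_prefixTree (X : Set Pt) : IsTree (prefixTree X) :=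
  fun _ _ hst ⟨x, hX, ht⟩ => ⟨x, hX, cone_anti hst ht⟩

lemma branches_prefixTree {X : Set Pt} (hX : IsClosed X) : branches (prefixTree X) = X := by
  refine Set.Subset.antisymm (fun x hx => ?_) fun x hx n => ⟨x, hx, mem_cone_seg x n⟩
  by_contra hxX
  obtain ⟨n, hn⟩ := PiNat.exists_disjoint_cylinder hX hxX
  obtain ⟨y, hyX, hy⟩ := hx n
  refine Set.disjoint_left.1 hn hyX (PiNat.mem_cylinder_iff.2 fun i hi => ?_)
  exact seg_eq_seg_iff.1 (by simpa [cone] using hy) i hi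

/-! ### Relatively clopen sets and finite covers -/

lemma clopenIn_self_inter {A B : Set Pt} : ClopenIn (B ∩ A) B ↔ ClopenIn A B := by
  rw [ClopenIn, ClopenIn, Subtype.preimage_coe_self_inter]

lemma ClopenIn.mono {A B B' : Set Pt} (h : ClopenIn A B) (hB : B' ⊆ B) : ClopenIn A B' :=
  h.preimage (continuous_inclusion hB)

lemma clopenIn_of_inter_eq {A B V : Set Pt} (hV : IsClopen V) (h : B ∩ A = B ∩ V) :
    ClopenIn A B := by
  rw [ClopenIn, Subtype.preimage_coe_eq_preimage_coe_iff.2 h]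
  exact hV.preimage continuous_subtype_val

lemma exists_isOpen_inter_eq_of_local {ι : Type*} {C B : Set Pt} {V W : ι → Set Pt}
    (hV : ∀ i, IsOpen (V i)) (hB : B ⊆ ⋃ i, V i) (hBV : ∀ i, B ∩ V i ⊆ W i)
    (hW : ∀ i, ∃ U, IsOpen U ∧ W i ∩ C = W i ∩ U) : ∃ U, IsOpen U ∧ B ∩ C = B ∩ U := by
  choose U hU hWU using hW
  refine ⟨⋃ i, U i ∩ V i, isOpen_iUnion fun i => (hU i).inter (hV i), Set.ext fun x => ?_⟩
  simp only [Set.mem_inter_iff, Set.mem_iUnion]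
  refine ⟨fun ⟨hxB, hxC⟩ => ?_, fun ⟨hxB, i, hxU, hxV⟩ => ⟨hxB, ?_⟩⟩
  · obtain ⟨i, hxV⟩ := Set.mem_iUnion.1 (hB hxB)
    have hxW := hBV i ⟨hxB, hxV⟩
    exact ⟨hxB, i, (Set.ext_iff.1 (hWU i) x |>.1 ⟨hxW, hxC⟩).2, hxV⟩
  · exact (Set.ext_iff.1 (hWU i) x |>.2 ⟨hBV i ⟨hxB, hxV⟩, hxU⟩).2

lemma ClopenIn.exists_isOpen_inter_eq {A B : Set Pt} (h : ClopenIn A B) :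
    (∃ U, IsOpen U ∧ B ∩ A = B ∩ U) ∧ ∃ U, IsOpen U ∧ B ∩ Aᶜ = B ∩ U := by
  have hc : IsOpen ((fun x : B => (x : Pt)) ⁻¹' Aᶜ) := h.isClosed.isOpen_compl
  obtain ⟨U, hU, hUA⟩ := isOpen_induced_iff.1 h.isOpen
  obtain ⟨U', hU', hUA'⟩ := isOpen_induced_iff.1 hc
  exact ⟨⟨U, hU, (Subtype.preimage_coe_eq_preimage_coe_iff.1 hUA).symm⟩,
    ⟨U', hU', (Subtype.preimage_coe_eq_preimage_coe_iff.1 hUA').symm⟩⟩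

lemma ClopenIn.of_local {ι : Type*} {A B : Set Pt} {V W : ι → Set Pt}
    (hV : ∀ i, IsOpen (V i)) (hB : B ⊆ ⋃ i, V i) (hBV : ∀ i, B ∩ V i ⊆ W i)
    (hW : ∀ i, ClopenIn A (W i)) : ClopenIn A B := by
  obtain ⟨U, hU, hAU⟩ := exists_isOpen_inter_eq_of_local hV hB hBV
    fun i => (hW i).exists_isOpen_inter_eq.1
  obtain ⟨U', hU', hAU'⟩ := exists_isOpen_inter_eq_of_local hV hB hBV
    fun i => (hW i).exists_isOpen_inter_eq.2
  have hpre : IsOpen ((fun x : B => (x : Pt)) ⁻¹' A) :=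
    isOpen_induced_iff.2 ⟨U, hU, Subtype.preimage_coe_eq_preimage_coe_iff.2 hAU.symm⟩
  have hpre' : IsOpen ((fun x : B => (x : Pt)) ⁻¹' Aᶜ) :=
    isOpen_induced_iff.2 ⟨U', hU', Subtype.preimage_coe_eq_preimage_coe_iff.2 hAU'.symm⟩
  exact ⟨isOpen_compl_iff.1 hpre', hpre⟩

lemma SqFin.mono {S S' : Set Str} {D : Set (Set Str)} (h : SqFin S D)
    (hS : branches S' ⊆ branches S) : SqFin S' D :=
  let ⟨D', hD', hfin, hcov⟩ := h
  ⟨D', hD', hfin, hS.trans hcov⟩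

lemma sqFin_of_mem {S : Set Str} {D : Set (Set Str)} (h : S ∈ D) : SqFin S D :=
  ⟨{S}, Set.singleton_subset_iff.2 h, Set.finite_singleton S, by simp⟩

lemma SqFin.of_cover {S : Set Str} {D F : Set (Set Str)} (hF : F.Finite)
    (hcov : branches S ⊆ ⋃ R ∈ F, branches R) (hR : ∀ R ∈ F, SqFin R D) : SqFin S D := by
  choose! D' hD' hfin hD'cov using hR
  refine ⟨⋃ R ∈ F, D' R, Set.iUnion₂_subset hD', hF.biUnion hfin, fun x hx => ?_⟩
  obtain ⟨R, hRF, hxR⟩ := Set.mem_iUnion₂.1 (hcov hx)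
  obtain ⟨V, hV, hxV⟩ := Set.mem_iUnion₂.1 (hD'cov R hRF hxR)
  exact Set.mem_iUnion₂.2 ⟨V, Set.mem_iUnion₂.2 ⟨R, hRF, hV⟩, hxV⟩

/-! ### Forcing notions generated by antichains -/

/-- The clauses (ii) and (iii) of `Refines P Q` for a single tree `S` of `Q`. -/
def TreeRefines (P : Set (Set Str)) (S : Set Str) : Prop :=
  SqFin S P ∧ ∀ T ∈ P, ClopenIn (branches S ∩ branches T) (branches S) ∧ ¬ T ⊆ S

lemma TreeRefines.Tres {P : Set (Set Str)} {S : Set Str} (h : TreeRefines P S) (s : Str) :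
    TreeRefines P (Tres S s) := by
  refine ⟨h.1.mono (branches_mono (Tres_subset S s)), fun T hT => ⟨?_, fun hTS =>
    (h.2 T hT).2 (hTS.trans (Tres_subset S s))⟩⟩
  exact clopenIn_self_inter.2
    ((clopenIn_self_inter.1 (h.2 T hT).1).mono (branches_mono (Tres_subset S s)))

def restrictions (A : Set (Set Str)) : Set (Set Str) := {R | ∃ T ∈ A, ∃ s ∈ T, R = Tres T s}

section Restrictions

variable {A : Set (Set Str)}

lemma subset_restrictions (hA : ∀ T ∈ A, IsPerfectTree T) : A ⊆ restrictions A :=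
  fun T hT => ⟨T, hT, [], (hA T hT).nil_mem, (Tres_nil T).symm⟩

lemma isPTF_restrictions (hne : A.Nonempty) (hA : ∀ T ∈ A, IsPerfectTree T) :
    IsPTF (restrictions A) := by
  refine ⟨hne.mono (subset_restrictions hA), ?_, ?_⟩
  · rintro R ⟨T, hT, s, hs, rfl⟩
    exact isPerfectTree_Tres (hA T hT) hs
  · rintro R ⟨T, hT, s, hs, rfl⟩ u hu
    rcases hu.2 with hsu | hus
    · exact ⟨T, hT, u, hu.1, Tres_Tres_of_prefix T hsu⟩
    · exact ⟨T, hT, s, hs, Tres_Tres_of_prefix' T hus⟩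

lemma countable_restrictions (hA : A.Countable) : (restrictions A).Countable := by
  refine (hA.biUnion fun T _ => Set.countable_range (Tres T)).mono ?_
  rintro R ⟨T, hT, s, -, rfl⟩
  exact Set.mem_biUnion hT ⟨s, rfl⟩

lemma specialPTF_restrictions (hA : ∀ T ∈ A, IsPerfectTree T) (hAD : A.Pairwise AD) :
    SpecialPTF (restrictions A) :=
  ⟨A, subset_restrictions hA, hAD, rfl⟩

lemma refines_restrictions {P : Set (Set Str)} (hdense : ∀ T ∈ P, ∃ S ∈ A, S ⊆ T)
    (hA : ∀ S ∈ A, IsPerfectTree S ∧ TreeRefines P S) : Refines P (restrictions A) := by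
  refine ⟨fun T hT => ?_, ?_, ?_⟩
  · obtain ⟨S, hS, hST⟩ := hdense T hT
    exact ⟨S, subset_restrictions (fun S hS => (hA S hS).1) hS, hST⟩
  · rintro R ⟨S, hS, s, -, rfl⟩
    exact ((hA S hS).2.Tres s).1
  · rintro R ⟨S, hS, s, -, rfl⟩
    exact ((hA S hS).2.Tres s).2

end Restrictions

lemma SpecialPTF.clopenIn {P : Set (Set Str)} (hP : SpecialPTF P) {R T : Set Str}
    (hR : R ∈ P) (hT : T ∈ P) : ClopenIn (branches T) (branches R) := by
  obtain ⟨A, -, hAD, rfl⟩ := hP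
  obtain ⟨R₀, hR₀, r, -, rfl⟩ := hR
  obtain ⟨T₀, hT₀, t, -, rfl⟩ := hT
  by_cases h : R₀ = T₀
  · subst h
    refine clopenIn_of_inter_eq (isClopen_cone t) ?_
    simp only [branches_Tres]
    ext x
    simp only [Set.mem_inter_iff]
    tauto
  · refine clopenIn_of_inter_eq isClopen_empty ?_
    rw [Set.inter_empty, branches_Tres, branches_Tres]
    exact Set.eq_empty_of_subset_empty fun x hx =>
      (hAD hR₀ hT₀ h).branches_inter_eq_empty.subset ⟨hx.1.1, hx.2.1⟩

lemma exists_mem_forall_notMem {P : Set (Set Str)} (hP : IsPTF P) {T : Set Str} (hT : T ∈ P)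
    (D : Finset (Set Str)) (hD : ∀ S ∈ D, IsTree S ∧ ∀ T' ∈ P, ¬ T' ⊆ S) :
    ∃ t ∈ T, ∀ S ∈ D, t ∉ S := by
  classical
  induction D using Finset.induction_on with
  | empty => exact ⟨[], (hP.2.1 T hT).nil_mem, by simp⟩
  | insert S D _ ih =>
    obtain ⟨t, ht, htD⟩ := ih fun S' hS' => hD S' (Finset.mem_insert_of_mem hS')
    obtain ⟨hStree, hS⟩ := hD S (Finset.mem_insert_self S D)
    obtain ⟨w, hw, hwS⟩ := Set.not_subset.1 (hS _ (hP.2.2 T hT t ht))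
    simp only [Finset.mem_insert, forall_eq_or_imp]
    rcases hw.2 with htw | hwt
    · exact ⟨w, hw.1, hwS, fun S' hS' hwS' => htD S' hS' ((hD S' (by simp [hS'])).1 htw hwS')⟩
    · exact ⟨t, ht, fun htS => hwS (hStree hwt htS), htD⟩

section Increasing

variable {l : Ordinal} {P : Ordinal → Set (Set Str)}

lemma denseIn_of_le (hinc : ∀ a b : Ordinal, a < b → b < l → Refines (P a) (P b))
    {a b : Ordinal} (hab : a ≤ b) (hb : b < l) : DenseIn (P b) (P a) := by
  rcases hab.lt_or_eq with hab | rfl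
  · exact (hinc a b hab hb).1
  · exact fun T hT => ⟨T, hT, subset_rfl⟩

lemma sqFin_of_le (hinc : ∀ a b : Ordinal, a < b → b < l → Refines (P a) (P b))
    {a b : Ordinal} (hab : a ≤ b) (hb : b < l) {T : Set Str} (hT : T ∈ P b) : SqFin T (P a) := by
  rcases hab.lt_or_eq with hab | rfl
  · exact (hinc a b hab hb).2.1 T hT
  · exact sqFin_of_mem hT

lemma clopenIn_of_le (hP : ∀ a < l, SpecialPTF (P a))
    (hinc : ∀ a b : Ordinal, a < b → b < l → Refines (P a) (P b))
    {a b : Ordinal} (hab : a ≤ b) (hb : b < l) {T T' : Set Str} (hT : T ∈ P b) (hT' : T' ∈ P a) :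
    ClopenIn (branches T') (branches T) := by
  rcases hab.lt_or_eq with hab | rfl
  · exact clopenIn_self_inter.1 ((hinc a b hab hb).2.2 T hT T' hT').1
  · exact (hP a hb).clopenIn hT hT'

end Increasing

/-! ### Fusion schemes -/

/-- Addresses grow at the head: `i :: p` is the `i`-th child of `p`. -/
structure FusionScheme where
  tree : List Bool → Set Str
  node : List Bool → Str
  hole : List Bool → Str
  isPerfectTree_tree : ∀ p, IsPerfectTree (tree p)
  node_nil : node [] = []
  length_le_length_node : ∀ p, p.length ≤ (node p).length
  node_mem : ∀ p, node p ∈ tree p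
  tree_cons_subset : ∀ i p, tree (i :: p) ⊆ Tres (tree p) (node (i :: p))
  node_prefix_node_cons : ∀ i p, node p <+: node (i :: p)
  hole_mem : ∀ p, hole p ∈ tree p
  node_prefix_hole : ∀ p, node p <+: hole p
  incompRel_node_cons : ∀ p, IncompRel (· <+: ·) (node (false :: p)) (node (true :: p))
  incompRel_hole_node_cons : ∀ i p, IncompRel (· <+: ·) (hole p) (node (i :: p))

section Existence

variable {Q : ℕ → Set (Set Str)}

lemma exists_fusion_step (hQ : ∀ n, IsPTF (Q n)) (hdense : ∀ n, DenseIn (Q (n + 1)) (Q n))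
    {n : ℕ} {R : Set Str} (hR : R ∈ Q n) {v : Str} (hv : v ∈ R) :
    ∃ (t : Bool → Str) (S : Bool → Set Str) (h : Str),
      (∀ i, S i ∈ Q (n + 1) ∧ t i ∈ S i ∧ S i ⊆ Tres R (t i) ∧ v <+: t i ∧ n < (t i).length) ∧
      h ∈ R ∧ v <+: h ∧ IncompRel (· <+: ·) (t false) (t true) ∧
      ∀ i, IncompRel (· <+: ·) h (t i) := by
  have hRperf := (hQ n).2.1 R hR
  obtain ⟨u, hu, hvu, hn⟩ := hRperf.exists_longer hv (n + 1)
  obtain ⟨t, h, hh, huh, ht, hinc, hhinc⟩ := hRperf.exists_incompRel_extensions hu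
  choose S hS hSt using fun i => hdense n _ ((hQ n).2.2 R hR (t i) (ht i).1)
  refine ⟨t, S, h, fun i => ⟨hS i, ?_, hSt i, hvu.trans (ht i).2,
    Nat.lt_of_succ_le (hn.trans (ht i).2.length_le)⟩, hh, hvu.trans huh, hinc, hhinc⟩
  exact ((hQ (n + 1)).2.1 _ (hS i)).mem_of_subset_Tres (hSt i)

lemma FusionScheme.exists (hQ : ∀ n, IsPTF (Q n)) (hdense : ∀ n, DenseIn (Q (n + 1)) (Q n))
    {T : Set Str} (hT : T ∈ Q 0) :
    ∃ F : FusionScheme, F.tree [] = T ∧ ∀ p, F.tree p ∈ Q p.length := by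
  choose! t S h hstep using fun n R (hR : R ∈ Q n) v (hv : v ∈ R) =>
    exists_fusion_step hQ hdense hR hv
  let N : List Bool → Set Str × Str := fun p =>
    p.rec (T, []) fun i p N => (S p.length N.1 N.2 i, t p.length N.1 N.2 i)
  have hN : ∀ p, (N p).1 ∈ Q p.length ∧ (N p).2 ∈ (N p).1 := by
    intro p
    induction p with
    | nil => exact ⟨hT, ((hQ 0).2.1 T hT).nil_mem⟩
    | cons i p ih =>
      obtain ⟨hS, ht, -⟩ := (hstep p.length _ ih.1 _ ih.2).1 i
      exact ⟨hS, ht⟩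
  have hstep' := fun p => hstep p.length _ (hN p).1 _ (hN p).2
  refine ⟨{ tree := fun p => (N p).1
            node := fun p => (N p).2
            hole := fun p => h p.length (N p).1 (N p).2
            isPerfectTree_tree := fun p => (hQ p.length).2.1 _ (hN p).1
            node_nil := rfl
            length_le_length_node := fun p => ?_
            node_mem := fun p => (hN p).2
            tree_cons_subset := fun i p => ((hstep' p).1 i).2.2.1
            node_prefix_node_cons := fun i p => ((hstep' p).1 i).2.2.2.1
            hole_mem := fun p => (hstep' p).2.1
            node_prefix_hole := fun p => (hstep' p).2.2.1
            incompRel_node_cons := fun p => (hstep' p).2.2.2.1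
            incompRel_hole_node_cons := fun i p => (hstep' p).2.2.2.2 i }, rfl, fun p => (hN p).1⟩
  cases p with
  | nil => exact Nat.zero_le _
  | cons i p => exact ((hstep' p).1 i).2.2.2.2

end Existence

namespace FusionScheme

variable (F : FusionScheme)

def level (n : ℕ) : Set Pt := ⋃ p ∈ {p : List Bool | p.length = n}, branches (F.tree p)

def body : Set Pt := ⋂ n, F.level n

def fusion : Set Str := prefixTree F.body

lemma tree_cons_subset_tree (i : Bool) (p : List Bool) : F.tree (i :: p) ⊆ F.tree p :=
  (F.tree_cons_subset i p).trans (Tres_subset _ _)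

lemma branches_tree_subset_cone (p : List Bool) : branches (F.tree p) ⊆ cone (F.node p) := by
  cases p with
  | nil => simp [F.node_nil, cone, seg]
  | cons i p =>
    refine (branches_mono (F.tree_cons_subset i p)).trans ?_
    rw [branches_Tres]
    exact Set.inter_subset_right

lemma level_antitone : Antitone F.level := by
  refine antitone_nat_of_succ_le fun n x hx => ?_
  obtain ⟨p, hp, hx⟩ := Set.mem_iUnion₂.1 hx
  cases p with
  | nil => simp at hp
  | cons i p =>
    exact Set.mem_iUnion₂.2 ⟨p, by simpa using hp, branches_mono (F.tree_cons_subset_tree i p) hx⟩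

lemma isClosed_body : IsClosed F.body :=
  isClosed_iInter fun n =>
    (List.finite_length_eq Bool n).isClosed_biUnion fun _ _ => isClosed_branches _

lemma exists_mem_branches_of_mem_body {x : Pt} (hx : x ∈ F.body) (n : ℕ) :
    ∃ p : List Bool, p.length = n ∧ x ∈ branches (F.tree p) := by
  simpa [level] using Set.mem_iInter.1 hx n

lemma eq_of_mem_cone_node {p q : List Bool} (hpq : p.length = q.length) {x : Pt}
    (hp : x ∈ cone (F.node p)) (hq : x ∈ cone (F.node q)) : p = q := by
  induction p generalizing q with
  | nil => exact (List.length_eq_zero_iff.1 hpq.symm).symm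
  | cons i p ih =>
    obtain _ | ⟨j, q⟩ := q
    · simp at hpq
    obtain rfl : p = q := ih (by simpa using hpq) (cone_anti (F.node_prefix_node_cons i p) hp)
      (cone_anti (F.node_prefix_node_cons j q) hq)
    cases i <;> cases j
    · rfl
    · exact (Set.disjoint_left.1 (disjoint_cone_of_incompRel (F.incompRel_node_cons p)) hp hq).elim
    · exact (Set.disjoint_left.1 (disjoint_cone_of_incompRel (F.incompRel_node_cons p)) hq hp).elim
    · rfl

lemma body_inter_cone_subset (p : List Bool) : F.body ∩ cone (F.node p) ⊆ branches (F.tree p) := by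
  rintro x ⟨hx, hxp⟩
  obtain ⟨q, hq, hxq⟩ := F.exists_mem_branches_of_mem_body hx p.length
  rwa [F.eq_of_mem_cone_node hq (F.branches_tree_subset_cone q hxq) hxp] at hxq

lemma body_inter_branches_nonempty (p : List Bool) : (F.body ∩ branches (F.tree p)).Nonempty := by
  let K : ℕ → Set Pt := fun m => branches (F.tree (List.replicate m false ++ p))
  obtain ⟨x, hx⟩ := IsCompact.nonempty_iInter_of_sequence_nonempty_isCompact_isClosed K
    (fun _ => branches_mono (F.tree_cons_subset_tree false _))
    (fun _ => (F.isPerfectTree_tree _).branches_nonempty)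
    (isClosed_branches _).isCompact (fun _ => isClosed_branches _)
  have hxK := Set.mem_iInter.1 hx
  refine ⟨x, Set.mem_iInter.2 fun n => F.level_antitone (Nat.le_add_right n p.length) ?_, by
    simpa [K] using hxK 0⟩
  exact Set.mem_iUnion₂.2 ⟨_, by simp, hxK n⟩

lemma branches_fusion : branches F.fusion = F.body :=
  branches_prefixTree F.isClosed_body

lemma Tres_fusion_subset (p : List Bool) : Tres F.fusion (F.node p) ⊆ F.tree p := by
  rintro w ⟨⟨x, hx, hxw⟩, hpw | hwp⟩
  · exact mem_of_mem_branches_of_mem_cone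
      (F.body_inter_cone_subset p ⟨hx, cone_anti hpw hxw⟩) hxw
  · exact (F.isPerfectTree_tree p).2.1 hwp (F.node_mem p)

lemma fusion_subset : F.fusion ⊆ F.tree [] := by
  simpa [F.node_nil, Tres_nil] using F.Tres_fusion_subset []

lemma hole_notMem_fusion (p : List Bool) : F.hole p ∉ F.fusion := by
  rintro ⟨x, hx, hxh⟩
  obtain ⟨_ | ⟨i, q⟩, hq, hxq⟩ := F.exists_mem_branches_of_mem_body hx (p.length + 1)
  · simp at hq
  have hxi := F.branches_tree_subset_cone _ hxq
  obtain rfl := F.eq_of_mem_cone_node (by simpa using hq)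
    (cone_anti (F.node_prefix_node_cons i q) hxi) (cone_anti (F.node_prefix_hole p) hxh)
  exact Set.disjoint_left.1 (disjoint_cone_of_incompRel (F.incompRel_hole_node_cons i q)) hxh hxi

lemma isPerfectTree_fusion : IsPerfectTree F.fusion := by
  have hmem : ∀ p, F.node p ∈ F.fusion := fun p => by
    obtain ⟨x, hx, hxp⟩ := F.body_inter_branches_nonempty p
    exact ⟨x, hx, F.branches_tree_subset_cone p hxp⟩
  refine ⟨⟨_, F.node_nil ▸ hmem []⟩, isTree_prefixTree _, fun s ⟨x, hx, hxs⟩ => ?_⟩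
  obtain ⟨p, hp, hxp⟩ := F.exists_mem_branches_of_mem_body hx s.length
  have hsp : s <+: F.node p := prefix_of_mem_cone hxs (F.branches_tree_subset_cone p hxp)
    (hp ▸ F.length_le_length_node p)
  exact ⟨_, _, hmem (false :: p), hmem (true :: p), hsp.trans (F.node_prefix_node_cons _ p),
    hsp.trans (F.node_prefix_node_cons _ p), F.incompRel_node_cons p⟩

lemma sqFin_fusion {D : Set (Set Str)} (n : ℕ)
    (hD : ∀ p : List Bool, p.length = n → SqFin (F.tree p) D) : SqFin F.fusion D := by
  refine SqFin.of_cover ((List.finite_length_eq Bool n).image F.tree) (fun x hx => ?_) ?_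
  · obtain ⟨p, hp, hxp⟩ := F.exists_mem_branches_of_mem_body (F.branches_fusion ▸ hx) n
    exact Set.mem_biUnion ⟨p, hp, rfl⟩ hxp
  · rintro _ ⟨p, hp, rfl⟩
    exact hD p hp

lemma clopenIn_fusion {A : Set Pt} (n : ℕ)
    (hA : ∀ p : List Bool, p.length = n → ClopenIn A (branches (F.tree p))) :
    ClopenIn A (branches F.fusion) := by
  rw [F.branches_fusion]
  refine ClopenIn.of_local (V := fun p : {p : List Bool // p.length = n} => cone (F.node p))
    (W := fun p => branches (F.tree p)) (fun p => (isClopen_cone _).isOpen) (fun x hx => ?_)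
    (fun p => F.body_inter_cone_subset p) (fun p => hA p p.2)
  obtain ⟨p, hp, hxp⟩ := F.exists_mem_branches_of_mem_body hx n
  exact Set.mem_iUnion.2 ⟨⟨p, hp⟩, F.branches_tree_subset_cone p hxp⟩

end FusionScheme

/-! ### Fusion along a cofinal sequence -/

section Cofinal

variable {l : Ordinal} {P : Ordinal → Set (Set Str)} {c : ℕ → Ordinal}

/-- Follow a branch of `T'` to a node of a level `m` with `a ≤ c m`. If `a < c m`, clause (iii)
of `P a ⊑ P (c m)` is violated. If `a = c m`, specialness of `P a` puts `T'` and the tree at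
that node under the same generator, so `T'` contains the hole of the node. -/
lemma FusionScheme.not_subset_fusion (hP : ∀ a < l, IsPTF (P a) ∧ SpecialPTF (P a))
    (hinc : ∀ a b : Ordinal, a < b → b < l → Refines (P a) (P b))
    (hc : Monotone c) (hcl : ∀ n, c n < l) (hcof : ∀ a < l, ∃ n, a ≤ c n)
    (F : FusionScheme) (hF : ∀ p, F.tree p ∈ P (c p.length))
    {a : Ordinal} (ha : a < l) {T' : Set Str} (hT' : T' ∈ P a) : ¬ T' ⊆ F.fusion := by
  intro hsub
  obtain ⟨A, hAP, hAD, hPa⟩ := (hP a ha).2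
  obtain ⟨T₀, hT₀, s, -, rfl⟩ : T' ∈ restrictions A := (Set.ext_iff.1 hPa T').1 hT'
  obtain ⟨x, hx⟩ := ((hP a ha).1.2.1 _ hT').branches_nonempty
  obtain ⟨n, hn⟩ := hcof a ha
  obtain ⟨p, hp, hxp⟩ := F.exists_mem_branches_of_mem_body
    (F.branches_fusion ▸ branches_mono hsub hx) (max n s.length)
  have hxv := F.branches_tree_subset_cone p hxp
  have hv : F.node p ∈ Tres T₀ s := mem_of_mem_branches_of_mem_cone hx hxv
  have hsv : s <+: F.node p := prefix_of_mem_cone ((branches_Tres T₀ s ▸ hx).2) hxv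
    (by have := F.length_le_length_node p; omega)
  have hTv : Tres (Tres T₀ s) (F.node p) ⊆ F.tree p :=
    (Tres_mono hsub _).trans (F.Tres_fusion_subset p)
  rcases (hn.trans (hc (le_max_left n s.length))).lt_or_eq with hlt | heq
  · exact ((hinc a _ hlt (hcl _)).2.2 _ (hp ▸ hF p) _ ((hP a ha).1.2.2 _ hT' _ hv)).2 hTv
  obtain ⟨R₀, hR₀, r, -, hpR⟩ : F.tree p ∈ restrictions A :=
    (Set.ext_iff.1 hPa _).1 (heq ▸ hp ▸ hF p)
  have hpR₀ : F.tree p ⊆ R₀ := hpR ▸ Tres_subset R₀ r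
  rw [Tres_Tres_of_prefix T₀ hsv] at hTv
  obtain rfl : T₀ = R₀ := by
    by_contra hne
    refine (isPerfectTree_Tres ((hP a ha).1.2.1 T₀ (hAP hT₀)) hv.1).infinite ?_
    exact (hAD hT₀ hR₀ hne).subset fun w hw => ⟨hw.1, hpR₀ (hTv hw)⟩
  exact F.hole_notMem_fusion p
    (hsub ⟨hpR₀ (F.hole_mem p), Or.inl (hsv.trans (F.node_prefix_hole p))⟩)

lemma exists_perfect_treeRefines_subset (hP : ∀ a < l, IsPTF (P a) ∧ SpecialPTF (P a))
    (hinc : ∀ a b : Ordinal, a < b → b < l → Refines (P a) (P b))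
    (hc : Monotone c) (hcl : ∀ n, c n < l) (hcof : ∀ a < l, ∃ n, a ≤ c n)
    {T : Set Str} (hT : T ∈ P (c 0)) :
    ∃ S ⊆ T, IsPerfectTree S ∧ ∀ a < l, TreeRefines (P a) S := by
  obtain ⟨F, hF0, hF⟩ := FusionScheme.exists (Q := fun n => P (c n))
    (fun n => (hP _ (hcl n)).1) (fun n => denseIn_of_le hinc (hc n.le_succ) (hcl _)) hT
  refine ⟨F.fusion, hF0 ▸ F.fusion_subset, F.isPerfectTree_fusion, fun a ha => ?_⟩
  obtain ⟨n, hn⟩ := hcof a ha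
  refine ⟨F.sqFin_fusion n fun p hp => sqFin_of_le hinc hn (hcl n) (hp ▸ hF p),
    fun T' hT' => ⟨clopenIn_self_inter.2 (F.clopenIn_fusion n fun p hp => ?_),
      F.not_subset_fusion hP hinc hc hcl hcof hF ha hT'⟩⟩
  exact clopenIn_of_le (fun a ha => (hP a ha).2) hinc hn (hcl n) (hp ▸ hF p) hT'

lemma exists_perfect_treeRefines_subset_AD (hP : ∀ a < l, IsPTF (P a) ∧ SpecialPTF (P a))
    (hinc : ∀ a b : Ordinal, a < b → b < l → Refines (P a) (P b))
    {b : ℕ → Ordinal} (hb : Monotone b) (hbl : ∀ n, b n < l) (hbcof : ∀ a < l, ∃ n, a ≤ b n)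
    {a : Ordinal} (ha : a < l) {T : Set Str} (hT : T ∈ P a) (D : Finset (Set Str))
    (hD : ∀ S ∈ D, IsPerfectTree S ∧ ∀ a < l, TreeRefines (P a) S) :
    ∃ S, (IsPerfectTree S ∧ ∀ a < l, TreeRefines (P a) S) ∧ S ⊆ T ∧ ∀ S' ∈ D, AD S' S := by
  obtain ⟨t, ht, htD⟩ := exists_mem_forall_notMem (hP a ha).1 hT D
    fun S hS => ⟨(hD S hS).1.2.1, fun T' hT' => (((hD S hS).2 a ha).2 T' hT').2⟩
  obtain ⟨R, hR, hRt⟩ := denseIn_of_le hinc (le_max_left a (b 0)) (max_lt ha (hbl 0)) _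
    ((hP a ha).1.2.2 T hT t ht)
  obtain ⟨S, hSR, hS⟩ := exists_perfect_treeRefines_subset hP hinc (monotone_const.max hb)
    (fun n => max_lt ha (hbl n))
    (fun a' ha' => (hbcof a' ha').imp fun _ hn => hn.trans (le_max_right _ _)) hR
  exact ⟨S, hS, (hSR.trans hRt).trans (Tres_subset T t),
    fun S' hS' => (AD_of_subset_Tres (hSR.trans hRt) (hD S' hS').1.2.1 (htD S' hS')).symm⟩

end Cofinal

/-! ### The upper bound -/

lemma exists_seq_of_forall_nat_finset_exists {α : Type*} (P : α → Prop) (q : ℕ → α → Prop)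
    (r : α → α → Prop)
    (h : ∀ n (s : Finset α), (∀ x ∈ s, P x) → ∃ y, P y ∧ q n y ∧ ∀ x ∈ s, r x y) :
    ∃ f : ℕ → α, ∀ n, P (f n) ∧ q n (f n) ∧ ∀ m < n, r (f m) (f n) := by
  classical
  have : Nonempty α := let ⟨y, _⟩ := h 0 ∅ (by simp); ⟨y⟩
  choose! g hg using h
  let s : ℕ → Finset α := fun n => Nat.rec ∅ (fun k s => insert (g k s) s) n
  have hs : ∀ n, (∀ x ∈ s n, P x) ∧ ∀ m < n, g m (s m) ∈ s n := by
    intro n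
    induction n with
    | zero => simp [s]
    | succ n ih =>
      refine ⟨fun x hx => ?_, fun m hm => ?_⟩
      · rcases Finset.mem_insert.1 hx with rfl | hx
        exacts [(hg n (s n) ih.1).1, ih.1 x hx]
      · rcases Nat.lt_succ_iff_lt_or_eq.1 hm with hm | rfl
        exacts [Finset.mem_insert_of_mem (ih.2 m hm), Finset.mem_insert_self _ _]
  refine ⟨fun n => g n (s n), fun n => ?_⟩
  obtain ⟨hP, hq, hr⟩ := hg n (s n) (hs n).1
  exact ⟨hP, hq, fun m hm => hr _ ((hs n).2 m hm)⟩

lemma countable_Iio_of_lt_ord_aleph_one {l : Ordinal} (hl : l < (Cardinal.aleph 1).ord) :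
    (Set.Iio l).Countable := by
  rw [← Cardinal.le_aleph0_iff_set_countable, Cardinal.mk_Iio_ordinal, Cardinal.lift_le_aleph0,
    ← Cardinal.lt_aleph_one_iff]
  exact Cardinal.lt_ord.1 hl

lemma exists_monotone_cofinal_seq {l : Ordinal} (hl : l < (Cardinal.aleph 1).ord) (hl0 : l ≠ 0) :
    ∃ b : ℕ → Ordinal, Monotone b ∧ (∀ n, b n < l) ∧ ∀ a < l, ∃ n, a ≤ b n := by
  obtain ⟨g, hg⟩ := (countable_Iio_of_lt_ord_aleph_one hl).exists_eq_range
    ⟨0, pos_iff_ne_zero.2 hl0⟩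
  refine ⟨partialSups g, (partialSups g).monotone, fun n => ?_, fun a ha => ?_⟩
  · obtain ⟨j, -, hj⟩ := exists_partialSups_eq g n
    rw [hj]
    exact (hg ▸ Set.mem_range_self j : g j ∈ Set.Iio l)
  · obtain ⟨n, rfl⟩ : a ∈ Set.range g := hg ▸ ha
    exact ⟨n, le_partialSups g n⟩

lemma isPerfectTree_univ : IsPerfectTree (Set.univ : Set Str) := by
  refine ⟨Set.univ_nonempty, fun _ _ _ _ => trivial, fun s _ => ?_⟩
  refine ⟨s ++ [false], s ++ [true], trivial, trivial, List.prefix_append _ _,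
    List.prefix_append _ _, ?_, ?_⟩ <;>
  · intro h
    simpa using h.eq_of_length (by simp)

lemma exists_countable_specialPTF : ∃ Q : Set (Set Str), IsPTF Q ∧ Q.Countable ∧ SpecialPTF Q := by
  have huniv : ∀ T ∈ ({Set.univ} : Set (Set Str)), IsPerfectTree T := by
    rintro T rfl
    exact isPerfectTree_univ
  exact ⟨_, isPTF_restrictions (Set.singleton_nonempty _) huniv,
    countable_restrictions (Set.countable_singleton _),
    specialPTF_restrictions huniv (Set.pairwise_singleton _ _)⟩

lemma exists_seq_cover {l : Ordinal} (hl : l < (Cardinal.aleph 1).ord) (hl0 : l ≠ 0)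
    {P : Ordinal → Set (Set Str)} (hP : ∀ a < l, (P a).Nonempty ∧ (P a).Countable) :
    ∃ f : ℕ → Set Str, (∀ k, ∃ a < l, f k ∈ P a) ∧ ∀ a < l, P a ⊆ Set.range f := by
  have hl0 : (0 : Ordinal) < l := pos_iff_ne_zero.2 hl0
  obtain ⟨f, hf⟩ := ((countable_Iio_of_lt_ord_aleph_one hl).biUnion fun a ha => (hP a ha).2)
    |>.exists_eq_range (((hP 0 hl0).1).mono (Set.subset_biUnion_of_mem (u := P) hl0))
  refine ⟨f, fun k => ?_, fun a ha => hf ▸ Set.subset_biUnion_of_mem (u := P) ha⟩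
  simpa using (hf ▸ Set.mem_range_self k : f k ∈ ⋃ a ∈ Set.Iio l, P a)

lemma exists_refinement_of_seq {l : Ordinal} {P : Ordinal → Set (Set Str)} {f S : ℕ → Set Str}
    (hf : ∀ a < l, P a ⊆ Set.range f)
    (hS : ∀ n, (IsPerfectTree (S n) ∧ ∀ a < l, TreeRefines (P a) (S n)) ∧ S n ⊆ f n ∧
      ∀ m < n, AD (S m) (S n)) :
    ∃ Q : Set (Set Str), IsPTF Q ∧ Q.Countable ∧ SpecialPTF Q ∧ ∀ a < l, Refines (P a) Q := by
  have hSperf : ∀ T ∈ Set.range S, IsPerfectTree T := by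
    rintro _ ⟨k, rfl⟩
    exact (hS k).1.1
  refine ⟨restrictions (Set.range S), isPTF_restrictions (Set.range_nonempty S) hSperf,
    countable_restrictions (Set.countable_range S), specialPTF_restrictions hSperf ?_,
    fun a ha => refines_restrictions (fun T hT => ?_) ?_⟩
  · rintro _ ⟨m, rfl⟩ _ ⟨n, rfl⟩ hmn
    rcases lt_trichotomy m n with hlt | rfl | hgt
    exacts [(hS n).2.2 m hlt, absurd rfl hmn, ((hS m).2.2 n hgt).symm]
  · obtain ⟨k, rfl⟩ := hf a ha hT
    exact ⟨S k, Set.mem_range_self k, (hS k).2.1⟩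
  · rintro _ ⟨k, rfl⟩
    exact ⟨(hS k).1.1, (hS k).1.2 a ha⟩

/-- Corollary 3.10 (xistC): a `⊑`-increasing sequence, of countable length,
of countable special perfect-tree forcing notions has a countable special
upper `⊑`-bound. -/
theorem stmt17 (l : Ordinal) (hl : l < (Cardinal.aleph 1).ord)
    (P : Ordinal → Set (Set Str))
    (h : ∀ a < l, IsPTF (P a) ∧ (P a).Countable ∧ SpecialPTF (P a))
    (hinc : ∀ a b : Ordinal, a < b → b < l → Refines (P a) (P b)) :
    ∃ Q : Set (Set Str), IsPTF Q ∧ Q.Countable ∧ SpecialPTF Q ∧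
      ∀ a < l, Refines (P a) Q := by
  rcases eq_or_ne l 0 with rfl | hl0
  · obtain ⟨Q, hQ⟩ := exists_countable_specialPTF
    exact ⟨Q, hQ.1, hQ.2.1, hQ.2.2, fun a ha => (not_lt_zero ha).elim⟩
  have hP : ∀ a < l, IsPTF (P a) ∧ SpecialPTF (P a) := fun a ha => ⟨(h a ha).1, (h a ha).2.2⟩
  obtain ⟨b, hb, hbl, hbcof⟩ := exists_monotone_cofinal_seq hl hl0
  obtain ⟨f, hfP, hf⟩ := exists_seq_cover hl hl0 fun a ha => ⟨(h a ha).1.1, (h a ha).2.1⟩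
  obtain ⟨S, hS⟩ := exists_seq_of_forall_nat_finset_exists
    (fun S => IsPerfectTree S ∧ ∀ a < l, TreeRefines (P a) S) (fun k S => S ⊆ f k) AD
    fun k D hD => by
      obtain ⟨a, ha, hfk⟩ := hfP k
      exact exists_perfect_treeRefines_subset_AD hP hinc hb hbl hbcof ha hfk D hD
  exact exists_refinement_of_seq hf hS

end
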